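/- arXiv:1404.5408 — 7 statements merged into one kernel-verified Lean document; each statement's English description precedes it below -/
import Mathlib

section
/- Fix (x,y,r,t) with y ≠ 0, H(r,t) ≠ 0, G(r,t) ≠ 0. Then substituting the minimizer π* into the maximizer formula gives η*(π*) = -λ(r) - σ̄(r)·H_r(r,t)/H(r,t); in particular η*(π*) does not depend on x or y. -/
/- STATEMENT 2: For fixed (x,y,r,t) with y ≠ 0, H(r,t) ≠ 0, G(r,t) ≠ 0, substituting the
minimizer π* into the maximizer formula gives η*(π*) = -λ(r) - σ̄(r)H_r(r,t)/H(r,t);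
in particular this value does not depend on x or y. -/
theorem stmt_2
    (T : ℝ) (hT : 0 < T)
    (H G Hr Gr : ℝ → ℝ → ℝ)
    (lam sigbar : ℝ → ℝ) (sig : ℝ → ℝ → ℝ)
    (hlam : Continuous lam) (hsigbar : Continuous sigbar)
    (hsig : Continuous fun p : ℝ × ℝ => sig p.1 p.2)
    (hsigpos : ∀ r t, 0 < sig r t)
    (hHr : ∀ r t, HasDerivAt (fun p => H p t) (Hr r t) r)
    (hGr : ∀ r t, HasDerivAt (fun p => G p t) (Gr r t) r)
    (x y r t : ℝ) (hy : y ≠ 0) (ht : t ∈ Set.Icc (0 : ℝ) T)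
    (hHne : H r t ≠ 0) (hGne : G r t ≠ 0)
    (etastar : ℝ → ℝ)
    (hetastar : ∀ π : ℝ, etastar π =
      -(sig r t * H r t * π) / (2 * y * G r t)
        - sigbar r * (x * Hr r t + 2 * y * Gr r t) / (2 * y * G r t))
    (pistar : ℝ)
    (hpistar : pistar =
      2 * y * G r t * (lam r / (sig r t * H r t)
          + (sigbar r / sig r t) * (Hr r t / (H r t) ^ 2 - Gr r t / (G r t * H r t)))
        - x * (sigbar r / sig r t) * (Hr r t / H r t)) :
    etastar pistar = -lam r - sigbar r * Hr r t / H r t := by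
  have hs : sig r t ≠ 0 := ne_of_gt (hsigpos r t)
  rw [hetastar, hpistar]
  field_simp
  ring
end

section
/- Fix (x,y,r,t) with x ∈ ℝ, y > 0, r ∈ ℝ, t ∈ [0,T], and suppose H(r,t) ≠ 0 and G(r,t) ≠ 0. Then the Isaacs expression evaluated at the saddle point candidate decomposes linearly: Λ^{π*,η*(π*)}(x,y,r,t) = x·E_H(r,t) + y·E_G(r,t). -/
set_option maxHeartbeats 2000000


/- STATEMENT 3: For fixed (x,y,r,t) with y > 0, H(r,t) ≠ 0 and G(r,t) ≠ 0, the Isaacs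
expression evaluated at the saddle point candidate decomposes linearly:
Λ^{π*,η*(π*)}(x,y,r,t) = x·E_H(r,t) + y·E_G(r,t). -/
theorem stmt_3
    (T : ℝ) (hT : 0 < T)
    (H G Ht Hr Hrr Gt Gr Grr : ℝ → ℝ → ℝ)
    (lam mubar sigbar : ℝ → ℝ) (sig : ℝ → ℝ → ℝ)
    (hlam : Continuous lam) (hmubar : Continuous mubar) (hsigbar : Continuous sigbar)
    (hsig : Continuous fun p : ℝ × ℝ => sig p.1 p.2)
    (hsigpos : ∀ r t, 0 < sig r t)
    (hHt : ∀ r t, HasDerivAt (fun s => H r s) (Ht r t) t)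
    (hHr : ∀ r t, HasDerivAt (fun p => H p t) (Hr r t) r)
    (hHrr : ∀ r t, HasDerivAt (fun p => Hr p t) (Hrr r t) r)
    (hGt : ∀ r t, HasDerivAt (fun s => G r s) (Gt r t) t)
    (hGr : ∀ r t, HasDerivAt (fun p => G p t) (Gr r t) r)
    (hGrr : ∀ r t, HasDerivAt (fun p => Gr p t) (Grr r t) r)
    (x y r t : ℝ) (hy : 0 < y) (ht : t ∈ Set.Icc (0 : ℝ) T)
    (hHne : H r t ≠ 0) (hGne : G r t ≠ 0)
    (Lam : ℝ → ℝ → ℝ)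
    (hLam : ∀ π η : ℝ, Lam π η =
      x * Ht r t + y * Gt r t + (π * sig r t * (lam r + η) + r * x) * H r t
        + η ^ 2 * y * G r t + (mubar r + sigbar r * η) * (x * Hr r t + y * Gr r t)
        + (1 / 2) * (sigbar r) ^ 2 * (x * Hrr r t + y * Grr r t)
        + π * sig r t * sigbar r * Hr r t + η * sigbar r * y * Gr r t)
    (etastar : ℝ → ℝ)
    (hetastar : ∀ π : ℝ, etastar π =
      -(sig r t * H r t * π) / (2 * y * G r t)
        - sigbar r * (x * Hr r t + 2 * y * Gr r t) / (2 * y * G r t))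
    (pistar : ℝ)
    (hpistar : pistar =
      2 * y * G r t * (lam r / (sig r t * H r t)
          + (sigbar r / sig r t) * (Hr r t / (H r t) ^ 2 - Gr r t / (G r t * H r t)))
        - x * (sigbar r / sig r t) * (Hr r t / H r t))
    (EH EG : ℝ)
    (hEH : EH = Ht r t + r * H r t + (mubar r - sigbar r * lam r) * Hr r t
        + (1 / 2) * (sigbar r) ^ 2 * Hrr r t - (sigbar r) ^ 2 * (Hr r t) ^ 2 / H r t)
    (hEG : EG = Gt r t + (1 / 2) * (sigbar r) ^ 2 * Grr r t
        + (lam r + sigbar r * Hr r t / H r t) ^ 2 * G r t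
        + (mubar r - 2 * sigbar r * lam r - 2 * (sigbar r) ^ 2 * Hr r t / H r t) * Gr r t) :
    Lam pistar (etastar pistar) = x * EH + y * EG := by
  have hsne : sig r t ≠ 0 := (hsigpos r t).ne'
  have hyne : y ≠ 0 := hy.ne'
  rw [hLam, hetastar, hpistar, hEH, hEG]
  field_simp
  ring
end

section
/- Fix (x,y,r,t) with x ∈ ℝ, y > 0, r ∈ ℝ, t ∈ [0,T], and suppose G(r,t) < 0 and H(r,t) ≠ 0. Then the Hamilton–Jacobi–Bellman–Isaacs value satisfies inf_{π∈ℝ} sup_{η∈ℝ} Λ^{π,η}(x,y,r,t) = x·E_H(r,t) + y·E_G(r,t), and the infimum and supremum are attained at π* and η*(π*) respectively. -/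
/- STATEMENT 4: For fixed (x,y,r,t) with y > 0, G(r,t) < 0 and H(r,t) ≠ 0, the HJBI value
satisfies inf_{π∈ℝ} sup_{η∈ℝ} Λ^{π,η}(x,y,r,t) = x·E_H(r,t) + y·E_G(r,t), the supremum
over η being attained at η*(π*) (for π = π*) and the infimum over π being attained at π*. -/

lemma csup_vertex (f : ℝ → ℝ) (a z0 : ℝ) (ha : a < 0)
    (hf : ∀ z, f z = f z0 + a * (z - z0) ^ 2) : (⨆ z, f z) = f z0 := by
  apply le_antisymm
  · exact ciSup_le fun z => by nlinarith [sq_nonneg (z - z0), hf z]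
  · exact le_ciSup ⟨f z0, by rintro v ⟨z, rfl⟩; nlinarith [sq_nonneg (z - z0), hf z]⟩ z0

lemma cinf_vertex (f : ℝ → ℝ) (a z0 : ℝ) (ha : 0 < a)
    (hf : ∀ z, f z = f z0 + a * (z - z0) ^ 2) : (⨅ z, f z) = f z0 := by
  apply le_antisymm
  · exact ciInf_le ⟨f z0, by rintro v ⟨z, rfl⟩; nlinarith [sq_nonneg (z - z0), hf z]⟩ z0
  · exact le_ciInf fun z => by nlinarith [sq_nonneg (z - z0), hf z]

set_option maxHeartbeats 4000000 in
theorem stmt_4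
    (T : ℝ) (hT : 0 < T)
    (H G Ht Hr Hrr Gt Gr Grr : ℝ → ℝ → ℝ)
    (lam mubar sigbar : ℝ → ℝ) (sig : ℝ → ℝ → ℝ)
    (hlam : Continuous lam) (hmubar : Continuous mubar) (hsigbar : Continuous sigbar)
    (hsig : Continuous fun p : ℝ × ℝ => sig p.1 p.2)
    (hsigpos : ∀ r t, 0 < sig r t)
    (hHt : ∀ r t, HasDerivAt (fun s => H r s) (Ht r t) t)
    (hHr : ∀ r t, HasDerivAt (fun p => H p t) (Hr r t) r)
    (hHrr : ∀ r t, HasDerivAt (fun p => Hr p t) (Hrr r t) r)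
    (hGt : ∀ r t, HasDerivAt (fun s => G r s) (Gt r t) t)
    (hGr : ∀ r t, HasDerivAt (fun p => G p t) (Gr r t) r)
    (hGrr : ∀ r t, HasDerivAt (fun p => Gr p t) (Grr r t) r)
    (x y r t : ℝ) (hy : 0 < y) (ht : t ∈ Set.Icc (0 : ℝ) T)
    (hGneg : G r t < 0) (hHne : H r t ≠ 0)
    (Lam : ℝ → ℝ → ℝ)
    (hLam : ∀ π η : ℝ, Lam π η =
      x * Ht r t + y * Gt r t + (π * sig r t * (lam r + η) + r * x) * H r t
        + η ^ 2 * y * G r t + (mubar r + sigbar r * η) * (x * Hr r t + y * Gr r t)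
        + (1 / 2) * (sigbar r) ^ 2 * (x * Hrr r t + y * Grr r t)
        + π * sig r t * sigbar r * Hr r t + η * sigbar r * y * Gr r t)
    (etastar : ℝ → ℝ)
    (hetastar : ∀ π : ℝ, etastar π =
      -(sig r t * H r t * π) / (2 * y * G r t)
        - sigbar r * (x * Hr r t + 2 * y * Gr r t) / (2 * y * G r t))
    (pistar : ℝ)
    (hpistar : pistar =
      2 * y * G r t * (lam r / (sig r t * H r t)
          + (sigbar r / sig r t) * (Hr r t / (H r t) ^ 2 - Gr r t / (G r t * H r t)))
        - x * (sigbar r / sig r t) * (Hr r t / H r t))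
    (EH EG : ℝ)
    (hEH : EH = Ht r t + r * H r t + (mubar r - sigbar r * lam r) * Hr r t
        + (1 / 2) * (sigbar r) ^ 2 * Hrr r t - (sigbar r) ^ 2 * (Hr r t) ^ 2 / H r t)
    (hEG : EG = Gt r t + (1 / 2) * (sigbar r) ^ 2 * Grr r t
        + (lam r + sigbar r * Hr r t / H r t) ^ 2 * G r t
        + (mubar r - 2 * sigbar r * lam r - 2 * (sigbar r) ^ 2 * Hr r t / H r t) * Gr r t) :
    (⨅ π : ℝ, ⨆ η : ℝ, Lam π η) = x * EH + y * EG ∧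
    (⨆ η : ℝ, Lam pistar η) = Lam pistar (etastar pistar) ∧
    (⨅ π : ℝ, ⨆ η : ℝ, Lam π η) = (⨆ η : ℝ, Lam pistar η) := by
  have hyne : y ≠ 0 := hy.ne'
  have hGne : G r t ≠ 0 := hGneg.ne
  have hsne : sig r t ≠ 0 := (hsigpos r t).ne'
  have hA : y * G r t < 0 := mul_neg_of_pos_of_neg hy hGneg
  have ha' : 0 < (sig r t * H r t) ^ 2 / (-(4 * (y * G r t))) := by
    apply div_pos (by positivity) (by linarith)
  -- identity in η
  have key1 : ∀ π η : ℝ, Lam π η = Lam π (etastar π) + (y * G r t) * (η - etastar π) ^ 2 := by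
    intro π η
    rw [hLam, hLam, hetastar]
    field_simp
    ring
  have sup_eq : ∀ π : ℝ, (⨆ η : ℝ, Lam π η) = Lam π (etastar π) := fun π =>
    csup_vertex (Lam π) (y * G r t) (etastar π) hA (key1 π)
  -- identity in π
  have key2 : ∀ π : ℝ, Lam π (etastar π) = Lam pistar (etastar pistar)
      + ((sig r t * H r t) ^ 2 / (-(4 * (y * G r t)))) * (π - pistar) ^ 2 := by
    intro π
    rw [hLam, hLam, hetastar, hetastar, hpistar]
    field_simp
    ring
  have inf_eq : (⨅ π : ℝ, Lam π (etastar π)) = Lam pistar (etastar pistar) :=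
    cinf_vertex (fun π => Lam π (etastar π)) _ pistar ha' key2
  have val_eq : Lam pistar (etastar pistar) = x * EH + y * EG := by
    rw [hLam, hetastar, hpistar, hEH, hEG]
    field_simp
    ring
  refine ⟨?_, sup_eq pistar, ?_⟩
  · rw [iInf_congr sup_eq, inf_eq, val_eq]
  · rw [iInf_congr sup_eq, inf_eq, sup_eq]
end

section
/- Suppose that for all (r,t) ∈ ℝ × [0,T] one has H(r,t) ≠ 0, G(r,t) < 0, E_H(r,t) = 0 and E_G(r,t) = 0. Then for every x ∈ ℝ, y > 0, r ∈ ℝ, t ∈ [0,T], with π* and η̄ := η*(π*) = -λ(r) - σ̄(r)·H_r(r,t)/H(r,t) evaluated at (x,y,r,t): (i) Λ^{π*,η}(x,y,r,t) ≤ 0 for all η ∈ ℝ; (ii) Λ^{π,η̄}(x,y,r,t) = 0 for all π ∈ ℝ (in particular Λ^{π,η̄} ≥ 0); (iii) Λ^{π*,η̄}(x,y,r,t) = 0. Thus (π*, η̄) is a pointwise saddle point of the Isaacs expression. -/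
/-!
With `η̄ = -λ - σ̄ H_r / H`, the Isaacs expression splits as
`Λ^{π,η} = x E_H + y E_G + (η - η̄) (π σ H + x σ̄ H_r + y G (η + η̄) + 2 y σ̄ G_r)`.
Under `E_H = E_G = 0` it therefore vanishes at `η = η̄` for every `π`, and `π*` is exactly the
control making the second factor equal to `y G (η - η̄)`, so `Λ^{π*,η} = y G (η - η̄)² ≤ 0`.
-/

section Isaacs

variable {h g ht hr hrr gt gr grr l m s sg x y r : ℝ}

theorem isaacs_eq_residuals_add (hh : h ≠ 0) (π η : ℝ) :
    x * ht + y * gt + (π * s * (l + η) + r * x) * h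
        + η ^ 2 * y * g + (m + sg * η) * (x * hr + y * gr)
        + (1 / 2) * sg ^ 2 * (x * hrr + y * grr)
        + π * s * sg * hr + η * sg * y * gr
      = x * (ht + r * h + (m - sg * l) * hr + (1 / 2) * sg ^ 2 * hrr - sg ^ 2 * hr ^ 2 / h)
        + y * (gt + (1 / 2) * sg ^ 2 * grr + (l + sg * hr / h) ^ 2 * g
          + (m - 2 * sg * l - 2 * sg ^ 2 * hr / h) * gr)
        + (η - (-l - sg * hr / h))
          * (π * s * h + x * sg * hr + y * g * (η + (-l - sg * hr / h)) + 2 * y * sg * gr) := by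
  field_simp
  ring

theorem pistar_mul_add_eq (hh : h ≠ 0) (hg : g ≠ 0) (hs : s ≠ 0) :
    (2 * y * g * (l / (s * h) + (sg / s) * (hr / h ^ 2 - gr / (g * h)))
        - x * (sg / s) * (hr / h)) * s * h + x * sg * hr + 2 * y * sg * gr
      = -2 * y * g * (-l - sg * hr / h) := by
  field_simp
  ring

end Isaacs

theorem stmt_5_general
    (T : ℝ)
    (H G Ht Hr Hrr Gt Gr Grr : ℝ → ℝ → ℝ)
    (lam mubar sigbar : ℝ → ℝ) (sig : ℝ → ℝ → ℝ)
    (hsigpos : ∀ r t, 0 < sig r t)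
    (Lam : ℝ → ℝ → ℝ → ℝ → ℝ → ℝ → ℝ)
    (hLam : ∀ π η x y r t : ℝ, Lam π η x y r t =
      x * Ht r t + y * Gt r t + (π * sig r t * (lam r + η) + r * x) * H r t
        + η ^ 2 * y * G r t + (mubar r + sigbar r * η) * (x * Hr r t + y * Gr r t)
        + (1 / 2) * (sigbar r) ^ 2 * (x * Hrr r t + y * Grr r t)
        + π * sig r t * sigbar r * Hr r t + η * sigbar r * y * Gr r t)
    (pistar : ℝ → ℝ → ℝ → ℝ → ℝ)
    (hpistar : ∀ x y r t : ℝ, pistar x y r t =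
      2 * y * G r t * (lam r / (sig r t * H r t)
          + (sigbar r / sig r t) * (Hr r t / (H r t) ^ 2 - Gr r t / (G r t * H r t)))
        - x * (sigbar r / sig r t) * (Hr r t / H r t))
    (etabar : ℝ → ℝ → ℝ)
    (hetabar : ∀ r t : ℝ, etabar r t = -lam r - sigbar r * Hr r t / H r t)
    (hHne : ∀ r : ℝ, ∀ t ∈ Set.Icc (0 : ℝ) T, H r t ≠ 0)
    (hGneg : ∀ r : ℝ, ∀ t ∈ Set.Icc (0 : ℝ) T, G r t < 0)
    (hEH : ∀ r : ℝ, ∀ t ∈ Set.Icc (0 : ℝ) T,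
      Ht r t + r * H r t + (mubar r - sigbar r * lam r) * Hr r t
        + (1 / 2) * (sigbar r) ^ 2 * Hrr r t - (sigbar r) ^ 2 * (Hr r t) ^ 2 / H r t = 0)
    (hEG : ∀ r : ℝ, ∀ t ∈ Set.Icc (0 : ℝ) T,
      Gt r t + (1 / 2) * (sigbar r) ^ 2 * Grr r t
        + (lam r + sigbar r * Hr r t / H r t) ^ 2 * G r t
        + (mubar r - 2 * sigbar r * lam r - 2 * (sigbar r) ^ 2 * Hr r t / H r t) * Gr r t
        = 0) :
    ∀ x y r : ℝ, 0 < y → ∀ t ∈ Set.Icc (0 : ℝ) T,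
      (∀ η : ℝ, Lam (pistar x y r t) η x y r t ≤ 0) ∧
      (∀ π : ℝ, Lam π (etabar r t) x y r t = 0) ∧
      Lam (pistar x y r t) (etabar r t) x y r t = 0 := by
  intro x y r hy t ht
  have hG := hGneg r t ht
  have hsplit : ∀ π η, Lam π η x y r t = (η - etabar r t) * (π * sig r t * H r t
      + x * sigbar r * Hr r t + y * G r t * (η + etabar r t) + 2 * y * sigbar r * Gr r t) := by
    intro π η
    rw [hLam, isaacs_eq_residuals_add (hHne r t ht), hEH r t ht, hEG r t ht, hetabar]
    ring
  have hpi : pistar x y r t * sig r t * H r t + x * sigbar r * Hr r t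
      + 2 * y * sigbar r * Gr r t = -2 * y * G r t * etabar r t := by
    rw [hpistar, hetabar]
    exact pistar_mul_add_eq (hHne r t ht) hG.ne (hsigpos r t).ne'
  have hsaddle : ∀ η, Lam (pistar x y r t) η x y r t = y * G r t * (η - etabar r t) ^ 2 := by
    intro η
    rw [hsplit]
    linear_combination (η - etabar r t) * hpi
  have hetabar_zero : ∀ π, Lam π (etabar r t) x y r t = 0 := fun π => by
    rw [hsplit, sub_self, zero_mul]
  refine ⟨fun η => ?_, hetabar_zero, hetabar_zero _⟩
  rw [hsaddle]
  exact mul_nonpos_of_nonpos_of_nonneg (mul_neg_of_pos_of_neg hy hG).le (sq_nonneg _)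

theorem stmt_5
    (T : ℝ) (hT : 0 < T)
    (H G Ht Hr Hrr Gt Gr Grr : ℝ → ℝ → ℝ)
    (lam mubar sigbar : ℝ → ℝ) (sig : ℝ → ℝ → ℝ)
    (hlam : Continuous lam) (hmubar : Continuous mubar) (hsigbar : Continuous sigbar)
    (hsig : Continuous fun p : ℝ × ℝ => sig p.1 p.2)
    (hsigpos : ∀ r t, 0 < sig r t)
    (hHt : ∀ r t, HasDerivAt (fun s => H r s) (Ht r t) t)
    (hHr : ∀ r t, HasDerivAt (fun p => H p t) (Hr r t) r)
    (hHrr : ∀ r t, HasDerivAt (fun p => Hr p t) (Hrr r t) r)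
    (hGt : ∀ r t, HasDerivAt (fun s => G r s) (Gt r t) t)
    (hGr : ∀ r t, HasDerivAt (fun p => G p t) (Gr r t) r)
    (hGrr : ∀ r t, HasDerivAt (fun p => Gr p t) (Grr r t) r)
    (Lam : ℝ → ℝ → ℝ → ℝ → ℝ → ℝ → ℝ)
    (hLam : ∀ π η x y r t : ℝ, Lam π η x y r t =
      x * Ht r t + y * Gt r t + (π * sig r t * (lam r + η) + r * x) * H r t
        + η ^ 2 * y * G r t + (mubar r + sigbar r * η) * (x * Hr r t + y * Gr r t)
        + (1 / 2) * (sigbar r) ^ 2 * (x * Hrr r t + y * Grr r t)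
        + π * sig r t * sigbar r * Hr r t + η * sigbar r * y * Gr r t)
    (pistar : ℝ → ℝ → ℝ → ℝ → ℝ)
    (hpistar : ∀ x y r t : ℝ, pistar x y r t =
      2 * y * G r t * (lam r / (sig r t * H r t)
          + (sigbar r / sig r t) * (Hr r t / (H r t) ^ 2 - Gr r t / (G r t * H r t)))
        - x * (sigbar r / sig r t) * (Hr r t / H r t))
    (etabar : ℝ → ℝ → ℝ)
    (hetabar : ∀ r t : ℝ, etabar r t = -lam r - sigbar r * Hr r t / H r t)
    (hHne : ∀ r : ℝ, ∀ t ∈ Set.Icc (0 : ℝ) T, H r t ≠ 0)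
    (hGneg : ∀ r : ℝ, ∀ t ∈ Set.Icc (0 : ℝ) T, G r t < 0)
    (hEH : ∀ r : ℝ, ∀ t ∈ Set.Icc (0 : ℝ) T,
      Ht r t + r * H r t + (mubar r - sigbar r * lam r) * Hr r t
        + (1 / 2) * (sigbar r) ^ 2 * Hrr r t - (sigbar r) ^ 2 * (Hr r t) ^ 2 / H r t = 0)
    (hEG : ∀ r : ℝ, ∀ t ∈ Set.Icc (0 : ℝ) T,
      Gt r t + (1 / 2) * (sigbar r) ^ 2 * Grr r t
        + (lam r + sigbar r * Hr r t / H r t) ^ 2 * G r t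
        + (mubar r - 2 * sigbar r * lam r - 2 * (sigbar r) ^ 2 * Hr r t / H r t) * Gr r t
        = 0) :
    ∀ x y r : ℝ, 0 < y → ∀ t ∈ Set.Icc (0 : ℝ) T,
      (∀ η : ℝ, Lam (pistar x y r t) η x y r t ≤ 0) ∧
      (∀ π : ℝ, Lam π (etabar r t) x y r t = 0) ∧
      Lam (pistar x y r t) (etabar r t) x y r t = 0 :=
  stmt_5_general T H G Ht Hr Hrr Gt Gr Grr lam mubar sigbar sig hsigpos Lam hLam pistar hpistar
    etabar hetabar hHne hGneg hEH hEG
end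

section
/- Let Γ : ℝ × [0,T] → ℝ be C^{2,1} with Γ(r,t) > 0 for all (r,t), and set H := -1/Γ. Then for every (r,t) ∈ ℝ × [0,T], H satisfies H_t + r·H + (μ̄(r)-σ̄(r)λ(r))·H_r + (1/2)·σ̄(r)²·H_rr - σ̄(r)²·H_r²/H = 0 if and only if Γ satisfies the linear equation Γ_t - r·Γ + (μ̄(r)-σ̄(r)λ(r))·Γ_r + (1/2)·σ̄(r)²·Γ_rr = 0; in fact the first expression equals Γ^{-2} times the second. -/
/-!
Since `H = -1/Γ`, the chain rule expresses `H_t`, `H_r`, `H_rr` through the derivatives of `Γ`.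
Substituting, the nonlinear term `-σ̄² H_r² / H = σ̄² Γ_r² / Γ³` cancels exactly the extra term
`-σ̄² Γ_r² / Γ³` of `½ σ̄² H_rr`, and what remains is `Γ⁻²` times the linear operator applied to `Γ`.
-/

section Derivatives

variable {𝕜 : Type*} [NontriviallyNormedField 𝕜]

theorem HasDerivAt.neg_one_div {f : 𝕜 → 𝕜} {f' x : 𝕜} (hf : HasDerivAt f f' x) (hx : f x ≠ 0) :
    HasDerivAt (fun y => -1 / f y) (f' / f x ^ 2) x :=
  ((hasDerivAt_const x (-1 : 𝕜)).fun_div hf hx).congr_deriv (by ring)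

theorem HasDerivAt.div_sq {f f' : 𝕜 → 𝕜} {f'' x : 𝕜} (hf : HasDerivAt f (f' x) x)
    (hf' : HasDerivAt f' f'' x) (hx : f x ≠ 0) :
    HasDerivAt (fun y => f' y / f y ^ 2) (f'' / f x ^ 2 - 2 * f' x ^ 2 / f x ^ 3) x :=
  (hf'.fun_div (hf.fun_pow 2) (pow_ne_zero 2 hx)).congr_deriv (by field_simp; ring)

end Derivatives

theorem nonlinearOperator_neg_one_div_eq {K : Type*} [Field K] [NeZero (2 : K)]
    {G Gt Gr Grr r a s : K} (hG : G ≠ 0) :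
    Gt / G ^ 2 + r * (-1 / G) + a * (Gr / G ^ 2)
        + 1 / 2 * s ^ 2 * (Grr / G ^ 2 - 2 * Gr ^ 2 / G ^ 3) - s ^ 2 * (Gr / G ^ 2) ^ 2 / (-1 / G)
      = 1 / G ^ 2 * (Gt - r * G + a * Gr + 1 / 2 * s ^ 2 * Grr) := by
  field_simp
  ring

theorem stmt_6_general
    (T : ℝ)
    (lam mubar sigbar : ℝ → ℝ)
    (Gam Gamt Gamr Gamrr : ℝ → ℝ → ℝ)
    (hGampos : ∀ r t, 0 < Gam r t)
    (hGamt : ∀ r t, HasDerivAt (fun s => Gam r s) (Gamt r t) t)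
    (hGamr : ∀ r t, HasDerivAt (fun p => Gam p t) (Gamr r t) r)
    (hGamrr : ∀ r t, HasDerivAt (fun p => Gamr p t) (Gamrr r t) r)
    (H Ht Hr Hrr : ℝ → ℝ → ℝ)
    (hHdef : ∀ r t, H r t = -1 / Gam r t)
    (hHt : ∀ r t, HasDerivAt (fun s => H r s) (Ht r t) t)
    (hHr : ∀ r t, HasDerivAt (fun p => H p t) (Hr r t) r)
    (hHrr : ∀ r t, HasDerivAt (fun p => Hr p t) (Hrr r t) r) :
    ∀ r : ℝ, ∀ t ∈ Set.Icc (0 : ℝ) T,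
      (Ht r t + r * H r t + (mubar r - sigbar r * lam r) * Hr r t
          + (1 / 2) * (sigbar r) ^ 2 * Hrr r t - (sigbar r) ^ 2 * (Hr r t) ^ 2 / H r t
        = (1 / (Gam r t) ^ 2) *
          (Gamt r t - r * Gam r t + (mubar r - sigbar r * lam r) * Gamr r t
            + (1 / 2) * (sigbar r) ^ 2 * Gamrr r t)) ∧
      ((Ht r t + r * H r t + (mubar r - sigbar r * lam r) * Hr r t
          + (1 / 2) * (sigbar r) ^ 2 * Hrr r t - (sigbar r) ^ 2 * (Hr r t) ^ 2 / H r t = 0)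
        ↔ (Gamt r t - r * Gam r t + (mubar r - sigbar r * lam r) * Gamr r t
            + (1 / 2) * (sigbar r) ^ 2 * Gamrr r t = 0)) := by
  have hne : ∀ r t, Gam r t ≠ 0 := fun r t => (hGampos r t).ne'
  obtain rfl : H = fun r t => -1 / Gam r t := funext₂ hHdef
  obtain rfl : Hr = fun r t => Gamr r t / Gam r t ^ 2 :=
    funext₂ fun r t => (hHr r t).unique ((hGamr r t).neg_one_div (hne r t))
  intro r t _
  have hHt_eq : Ht r t = Gamt r t / Gam r t ^ 2 :=
    (hHt r t).unique ((hGamt r t).neg_one_div (hne r t))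
  have hHrr_eq : Hrr r t = Gamrr r t / Gam r t ^ 2 - 2 * Gamr r t ^ 2 / Gam r t ^ 3 :=
    (hHrr r t).unique ((hGamr r t).div_sq (hGamrr r t) (hne r t))
  rw [hHt_eq, hHrr_eq, nonlinearOperator_neg_one_div_eq (hne r t)]
  exact ⟨rfl, by simp [hne r t]⟩

theorem stmt_6
    (T : ℝ) (hT : 0 < T)
    (lam mubar sigbar : ℝ → ℝ)
    (hlam : Continuous lam) (hmubar : Continuous mubar) (hsigbar : Continuous sigbar)
    (Gam Gamt Gamr Gamrr : ℝ → ℝ → ℝ)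
    (hGampos : ∀ r t, 0 < Gam r t)
    (hGamt : ∀ r t, HasDerivAt (fun s => Gam r s) (Gamt r t) t)
    (hGamr : ∀ r t, HasDerivAt (fun p => Gam p t) (Gamr r t) r)
    (hGamrr : ∀ r t, HasDerivAt (fun p => Gamr p t) (Gamrr r t) r)
    (H Ht Hr Hrr : ℝ → ℝ → ℝ)
    (hHdef : ∀ r t, H r t = -1 / Gam r t)
    (hHt : ∀ r t, HasDerivAt (fun s => H r s) (Ht r t) t)
    (hHr : ∀ r t, HasDerivAt (fun p => H p t) (Hr r t) r)
    (hHrr : ∀ r t, HasDerivAt (fun p => Hr p t) (Hrr r t) r) :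
    ∀ r : ℝ, ∀ t ∈ Set.Icc (0 : ℝ) T,
      (Ht r t + r * H r t + (mubar r - sigbar r * lam r) * Hr r t
          + (1 / 2) * (sigbar r) ^ 2 * Hrr r t - (sigbar r) ^ 2 * (Hr r t) ^ 2 / H r t
        = (1 / (Gam r t) ^ 2) *
          (Gamt r t - r * Gam r t + (mubar r - sigbar r * lam r) * Gamr r t
            + (1 / 2) * (sigbar r) ^ 2 * Gamrr r t)) ∧
      ((Ht r t + r * H r t + (mubar r - sigbar r * lam r) * Hr r t
          + (1 / 2) * (sigbar r) ^ 2 * Hrr r t - (sigbar r) ^ 2 * (Hr r t) ^ 2 / H r t = 0)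
        ↔ (Gamt r t - r * Gam r t + (mubar r - sigbar r * lam r) * Gamr r t
            + (1 / 2) * (sigbar r) ^ 2 * Gamrr r t = 0)) :=
  stmt_6_general T lam mubar sigbar Gam Gamt Gamr Gamrr hGampos hGamt hGamr hGamrr H Ht Hr Hrr hHdef
    hHt hHr hHrr
end

section
/- Let α > 0 and λ, θ̄, σ̄ ∈ ℝ, and define H(r,t) := A₁(t)·e^{B₁(t)·r} on ℝ × [0,T]. Then H is C^{2,1}, H(r,t) < 0, H(r,T) = -1, H_r(r,t)/H(r,t) = B₁(t), and H solves the semilinear PDE H_t + r·H + (θ̄ - α·r - σ̄·λ)·H_r + (1/2)·σ̄²·H_rr - σ̄²·H_r²/H = 0 for all (r,t) ∈ ℝ × [0,T]. -/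
/-! Since `H = A₁(t) e^{B₁(t) r}`, every derivative of `H` is `H` times an explicit factor:
`H_r = B₁ H`, `H_rr = B₁² H` and `H_t = (A₁'/A₁ + B₁' r) H`, where `A₁'/A₁ = -f` for the
integrand `f` of `A₁`. Dividing the PDE by `H ≠ 0`, the terms free of `r` cancel by the choice
of `f`, and what remains is `r (B₁' + 1 - α B₁)`, which vanishes because `B₁` solves the
Riccati equation `B₁' = α B₁ - 1`. -/

open Real

theorem hasDerivAt_mul_exp_mul (a b r : ℝ) :
    HasDerivAt (fun p => a * exp (b * p)) (a * exp (b * r) * b) r := by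
  simpa [mul_assoc] using (((hasDerivAt_id r).const_mul b).exp.const_mul a)

theorem deriv_mul_exp_mul (a b : ℝ) :
    deriv (fun p => a * exp (b * p)) = fun r => a * exp (b * r) * b :=
  funext fun r => (hasDerivAt_mul_exp_mul a b r).deriv

theorem deriv_deriv_mul_exp_mul (a b r : ℝ) :
    deriv (fun p => deriv (fun q => a * exp (b * q)) p) r = a * exp (b * r) * b * b := by
  rw [deriv_mul_exp_mul]
  exact ((hasDerivAt_mul_exp_mul a b r).mul_const b).deriv

theorem hasDerivAt_neg_exp_integral {f : ℝ → ℝ} (hf : Continuous f) (T t : ℝ) :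
    HasDerivAt (fun u => -exp (∫ s in u..T, f s)) (-f t * -exp (∫ s in t..T, f s)) t := by
  have hF := intervalIntegral.integral_hasDerivAt_left (hf.intervalIntegrable t T)
    (hf.stronglyMeasurableAtFilter _ _) hf.continuousAt
  exact hF.exp.fun_neg.congr_deriv (by ring)

namespace Vasicek

theorem hasDerivAt_B {α : ℝ} (hα : α ≠ 0) (T t : ℝ) :
    HasDerivAt (fun s => 1 / α * (1 - exp (-(α * (T - s)))))
      (α * (1 / α * (1 - exp (-(α * (T - t))))) - 1) t := by
  have h_exponent : HasDerivAt (fun s => -(α * (T - s))) α t := by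
    simpa using (((hasDerivAt_id t).const_sub T).const_mul α).fun_neg
  refine ((h_exponent.exp.const_sub 1).const_mul (1 / α)).congr_deriv ?_
  field_simp
  ring

end Vasicek

theorem stmt_15_general
    (T : ℝ)
    (α lam θ σb : ℝ) (hα : 0 < α)
    (B1 A1 : ℝ → ℝ)
    (hB1 : ∀ t : ℝ, B1 t = (1 / α) * (1 - Real.exp (-(α * (T - t)))))
    (hA1 : ∀ t : ℝ, A1 t =
      -Real.exp (∫ s in t..T, ((θ - σb * lam) * B1 s - (1 / 2) * σb ^ 2 * (B1 s) ^ 2)))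
    (H : ℝ → ℝ → ℝ)
    (hH : ∀ r t : ℝ, H r t = A1 t * Real.exp (B1 t * r)) :
    (∀ t : ℝ, ContDiff ℝ 2 fun p => H p t) ∧
    (∀ r : ℝ, Differentiable ℝ fun s => H r s) ∧
    (∀ r : ℝ, ∀ t ∈ Set.Icc (0 : ℝ) T, H r t < 0) ∧
    (∀ r : ℝ, H r T = -1) ∧
    (∀ r : ℝ, ∀ t ∈ Set.Icc (0 : ℝ) T, deriv (fun p => H p t) r / H r t = B1 t) ∧
    (∀ r : ℝ, ∀ t ∈ Set.Icc (0 : ℝ) T,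
      deriv (fun s => H r s) t + r * H r t
        + (θ - α * r - σb * lam) * deriv (fun p => H p t) r
        + (1 / 2) * σb ^ 2 * deriv (fun p => deriv (fun q => H q t) p) r
        - σb ^ 2 * (deriv (fun p => H p t) r) ^ 2 / H r t = 0) := by
  set f : ℝ → ℝ := fun s => (θ - σb * lam) * B1 s - (1 / 2) * σb ^ 2 * B1 s ^ 2
  have hB : ∀ t, HasDerivAt B1 (α * B1 t - 1) t := by
    rw [funext hB1]
    exact Vasicek.hasDerivAt_B hα.ne' T
  have hA : ∀ t, HasDerivAt A1 (-f t * A1 t) t := by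
    have hB_cont : Continuous B1 := continuous_iff_continuousAt.2 fun t => (hB t).continuousAt
    have hf : Continuous f := by fun_prop
    rw [funext hA1]
    exact hasDerivAt_neg_exp_integral hf T
  have hA_neg : ∀ t, A1 t < 0 := fun t => (hA1 t).trans_lt (neg_neg_of_pos (exp_pos _))
  have hH_space : ∀ t, (fun p => H p t) = fun p => A1 t * exp (B1 t * p) :=
    fun t => funext fun p => hH p t
  have hH_time : ∀ r t, HasDerivAt (fun s => H r s)
      (-f t * A1 t * exp (B1 t * r) + A1 t * (exp (B1 t * r) * ((α * B1 t - 1) * r))) t := by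
    intro r t
    simpa only [hH] using (hA t).fun_mul ((hB t).mul_const r).exp
  refine ⟨fun t => ?_, fun r t => (hH_time r t).differentiableAt, fun r t _ => ?_, fun r => ?_,
    fun r t _ => ?_, fun r t _ => ?_⟩
  · rw [hH_space]
    fun_prop
  · rw [hH]
    exact mul_neg_of_neg_of_pos (hA_neg t) (exp_pos _)
  · simp [hH, hA1, hB1]
  · rw [hH_space, (hasDerivAt_mul_exp_mul _ _ r).deriv, hH]
    field_simp [(hA_neg t).ne]
  · rw [(hH_time r t).deriv, hH_space, deriv_deriv_mul_exp_mul,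
      (hasDerivAt_mul_exp_mul _ _ r).deriv, hH]
    field_simp [(hA_neg t).ne]
    ring

theorem stmt_15
    (T : ℝ) (hT : 0 < T)
    (α lam θ σb : ℝ) (hα : 0 < α)
    (B1 A1 : ℝ → ℝ)
    (hB1 : ∀ t : ℝ, B1 t = (1 / α) * (1 - Real.exp (-(α * (T - t)))))
    (hA1 : ∀ t : ℝ, A1 t =
      -Real.exp (∫ s in t..T, ((θ - σb * lam) * B1 s - (1 / 2) * σb ^ 2 * (B1 s) ^ 2)))
    (H : ℝ → ℝ → ℝ)
    (hH : ∀ r t : ℝ, H r t = A1 t * Real.exp (B1 t * r)) :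
    (∀ t : ℝ, ContDiff ℝ 2 fun p => H p t) ∧
    (∀ r : ℝ, Differentiable ℝ fun s => H r s) ∧
    (∀ r : ℝ, ∀ t ∈ Set.Icc (0 : ℝ) T, H r t < 0) ∧
    (∀ r : ℝ, H r T = -1) ∧
    (∀ r : ℝ, ∀ t ∈ Set.Icc (0 : ℝ) T, deriv (fun p => H p t) r / H r t = B1 t) ∧
    (∀ r : ℝ, ∀ t ∈ Set.Icc (0 : ℝ) T,
      deriv (fun s => H r s) t + r * H r t
        + (θ - α * r - σb * lam) * deriv (fun p => H p t) r
        + (1 / 2) * σb ^ 2 * deriv (fun p => deriv (fun q => H q t) p) r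
        - σb ^ 2 * (deriv (fun p => H p t) r) ^ 2 / H r t = 0) :=
  stmt_15_general T α lam θ σb hα B1 A1 hB1 hA1 H hH
end

section
/- Let α > 0 and λ, θ̄, σ̄ ∈ ℝ, and define G(r,t) := A₂(t) on ℝ × [0,T] (constant in r). Then G is C^{2,1}, G(r,T) = -1, G(r,t) < 0, and G solves the PDE G_t + (1/2)·σ̄²·G_rr + (λ + σ̄·B₁(t))²·G + (θ̄ - α·r - 2·σ̄·λ - 2·σ̄²·B₁(t))·G_r = 0 for all (r,t) ∈ ℝ × [0,T]. -/
open Real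

/- Since `G` does not depend on `r`, all `r`-derivatives vanish and the PDE reduces to the linear
ODE `A₂' + (λ + σ̄ B₁)² A₂ = 0`, which `A₂ = -exp (∫_t^T (λ + σ̄ B₁)²)` solves by the fundamental
theorem of calculus. -/

theorem hasDerivAt_neg_exp_integral_left {f : ℝ → ℝ} (hf : Continuous f) (T t : ℝ) :
    HasDerivAt (fun u => -exp (∫ s in u..T, f s)) (f t * exp (∫ s in t..T, f s)) t := by
  have hI : HasDerivAt (fun u => ∫ s in u..T, f s) (-f t) t :=
    intervalIntegral.integral_hasDerivAt_left (hf.intervalIntegrable _ _)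
      (hf.stronglyMeasurableAtFilter _ _) hf.continuousAt
  exact hI.exp.neg.congr_deriv (by ring)

theorem stmt_16_general
    (T : ℝ)
    (α lam θ σb : ℝ)
    (B1 A2 : ℝ → ℝ)
    (hB1 : ∀ t : ℝ, B1 t = (1 / α) * (1 - Real.exp (-(α * (T - t)))))
    (hA2 : ∀ t : ℝ, A2 t = -Real.exp (∫ s in t..T, (lam + σb * B1 s) ^ 2))
    (G : ℝ → ℝ → ℝ)
    (hG : ∀ r t : ℝ, G r t = A2 t) :
    (∀ t : ℝ, ContDiff ℝ 2 fun p => G p t) ∧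
    (∀ r : ℝ, Differentiable ℝ fun s => G r s) ∧
    (∀ r : ℝ, G r T = -1) ∧
    (∀ r : ℝ, ∀ t ∈ Set.Icc (0 : ℝ) T, G r t < 0) ∧
    (∀ r : ℝ, ∀ t ∈ Set.Icc (0 : ℝ) T,
      deriv (fun s => G r s) t
        + (1 / 2) * σb ^ 2 * deriv (fun p => deriv (fun q => G q t) p) r
        + (lam + σb * B1 t) ^ 2 * G r t
        + (θ - α * r - 2 * σb * lam - 2 * σb ^ 2 * B1 t) * deriv (fun p => G p t) r
        = 0) := by
  have hB1c : Continuous B1 := by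
    rw [funext hB1]
    fun_prop
  have hA2' (t : ℝ) :
      HasDerivAt A2 ((lam + σb * B1 t) ^ 2 * exp (∫ s in t..T, (lam + σb * B1 s) ^ 2)) t := by
    rw [funext hA2]
    exact hasDerivAt_neg_exp_integral_left (by fun_prop) T t
  have hGt (r : ℝ) : (fun s => G r s) = A2 := funext (hG r)
  have hGr (t : ℝ) : (fun q => G q t) = fun _ => A2 t := funext fun q => hG q t
  refine ⟨fun t => ?_, fun r => ?_, fun r => ?_, fun r t _ => ?_, fun r t _ => ?_⟩
  · rw [hGr]
    exact contDiff_const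
  · rw [hGt]
    exact fun t => (hA2' t).differentiableAt
  · rw [hG, hA2, intervalIntegral.integral_same, exp_zero]
  · rw [hG, hA2, neg_lt_zero]
    exact exp_pos _
  · rw [hGt, hGr, (hA2' t).deriv, hG, hA2]
    simp only [deriv_const]
    ring

theorem stmt_16
    (T : ℝ) (hT : 0 < T)
    (α lam θ σb : ℝ) (hα : 0 < α)
    (B1 A2 : ℝ → ℝ)
    (hB1 : ∀ t : ℝ, B1 t = (1 / α) * (1 - Real.exp (-(α * (T - t)))))
    (hA2 : ∀ t : ℝ, A2 t = -Real.exp (∫ s in t..T, (lam + σb * B1 s) ^ 2))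
    (G : ℝ → ℝ → ℝ)
    (hG : ∀ r t : ℝ, G r t = A2 t) :
    (∀ t : ℝ, ContDiff ℝ 2 fun p => G p t) ∧
    (∀ r : ℝ, Differentiable ℝ fun s => G r s) ∧
    (∀ r : ℝ, G r T = -1) ∧
    (∀ r : ℝ, ∀ t ∈ Set.Icc (0 : ℝ) T, G r t < 0) ∧
    (∀ r : ℝ, ∀ t ∈ Set.Icc (0 : ℝ) T,
      deriv (fun s => G r s) t
        + (1 / 2) * σb ^ 2 * deriv (fun p => deriv (fun q => G q t) p) r
        + (lam + σb * B1 t) ^ 2 * G r t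
        + (θ - α * r - 2 * σb * lam - 2 * σb ^ 2 * B1 t) * deriv (fun p => G p t) r
        = 0) :=
  stmt_16_general T α lam θ σb B1 A2 hB1 hA2 G hG
end
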